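/- If a finite simple graph G has k pairwise disjoint connected dominating sets V_1, V_2, …, V_k such that for all i ≠ j, every connected component of the bipartite subgraph ⟨V_i, V_j⟩_G contains a cycle, then for every set S ⊆ V(G) \ (V_1 ∪ … ∪ V_k), the graph G − S obtained by deleting the vertices of S has k completely independent spanning trees. -/

import Mathlib

namespace CISTPaper

open SimpleGraph

variable {V : Type*} {W : Type*}

/-- `T` is a spanning tree of `G` (both graphs on the same vertex type). -/
def IsSpanningTree (G T : SimpleGraph V) : Prop :=
  T ≤ G ∧ T.IsTree

/-- The set of internal vertices of a graph: vertices of degree at least 2. -/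
def internalVerts (T : SimpleGraph V) : Set V :=
  {v | 2 ≤ (T.neighborSet v).ncard}

/-- `G` has `k` completely independent spanning trees: pairwise edge-disjoint
spanning trees whose sets of internal vertices are pairwise disjoint. -/
def HasCIST (G : SimpleGraph V) (k : ℕ) : Prop :=
  ∃ T : Fin k → SimpleGraph V,
    (∀ i, IsSpanningTree G (T i)) ∧
    ∀ i j, i ≠ j →
      Disjoint (T i).edgeSet (T j).edgeSet ∧
      Disjoint (internalVerts (T i)) (internalVerts (T j))

/-- `τ*(G)`: the maximum number of completely independent spanning trees of `G`. -/
noncomputable def tauStar (G : SimpleGraph V) : ℕ :=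
  sSup {k | HasCIST G k}

/-- `G` has `k` pairwise edge-disjoint spanning trees. -/
def HasEDST (G : SimpleGraph V) (k : ℕ) : Prop :=
  ∃ T : Fin k → SimpleGraph V,
    (∀ i, IsSpanningTree G (T i)) ∧
    ∀ i j, i ≠ j → Disjoint (T i).edgeSet (T j).edgeSet

/-- `τ(G)`: the maximum number of pairwise edge-disjoint spanning trees of `G`. -/
noncomputable def tau (G : SimpleGraph V) : ℕ :=
  sSup {k | HasEDST G k}

/-- The minimum degree `δ(G)`. -/
noncomputable def minDeg (G : SimpleGraph V) : ℕ :=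
  sInf (Set.range fun v => (G.neighborSet v).ncard)

/-- `H` is `k`-connected: `H` has more than `k` vertices and deleting any set of
fewer than `k` vertices leaves `H` connected. -/
def IsKConnected (H : SimpleGraph W) (k : ℕ) : Prop :=
  k < Nat.card W ∧ ∀ S : Set W, S.ncard < k → (H.induce Sᶜ).Connected

/-- The vertex connectivity `κ(H)`: the largest `k` such that `H` is `k`-connected. -/
noncomputable def kappa (H : SimpleGraph W) : ℕ :=
  sSup {k | IsKConnected H k}

/-- An edge-cut of `G`: a set of edges of `G` whose deletion disconnects `G`. -/
def IsEdgeCut (G : SimpleGraph V) (F : Set (Sym2 V)) : Prop :=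
  F ⊆ G.edgeSet ∧ ¬ (G.deleteEdges F).Connected

/-- `G` is super edge-connected: every minimum-size edge-cut consists of
all edges incident to a single vertex. -/
def SuperEdgeConnected (G : SimpleGraph V) : Prop :=
  ∀ F : Set (Sym2 V), IsEdgeCut G F →
    (∀ F' : Set (Sym2 V), IsEdgeCut G F' → F.ncard ≤ F'.ncard) →
    ∃ v : V, F = G.incidenceSet v

/-- `f_S(v) = deg_G(v) - deg_{⟨S⟩_G}(v)`. -/
noncomputable def fS (G : SimpleGraph V) (S : Set V) (v : V) : ℕ :=
  (G.neighborSet v).ncard - (G.neighborSet v ∩ S).ncard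

/-- `ζ(S)`: the minimum of `f_S(u) + f_S(v)` over edges `uv` of `⟨S⟩_G`
(`⊤` if there is no such edge). -/
noncomputable def zeta (G : SimpleGraph V) (S : Set V) : ℕ∞ :=
  sInf {x : ℕ∞ | ∃ u ∈ S, ∃ v ∈ S, G.Adj u v ∧ x = ((fS G S u + fS G S v : ℕ) : ℕ∞)}

/-- A star: a tree with at most one vertex of degree at least 2. -/
def IsStar (H : SimpleGraph W) : Prop :=
  H.IsTree ∧ (internalVerts H).Subsingleton

/-- `S` is a star-subset of `V(G)`: every connected component of the induced
subgraph `⟨S⟩_G` is a star (vacuously true for `S = ∅`). -/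
def IsStarSubset (G : SimpleGraph V) (S : Set V) : Prop :=
  ∀ C : (G.induce S).ConnectedComponent, IsStar ((G.induce S).induce C.supp)

/-- `τ'(G)`: the maximum over proper star-subsets `S ⊊ V(G)` of
`min (τ(G - S)) (ζ(S))`. -/
noncomputable def tauPrime (G : SimpleGraph V) : ℕ :=
  sSup {m | ∃ S : Set V, S ≠ Set.univ ∧ IsStarSubset G S ∧
    m = (min ((tau (G.induce Sᶜ) : ℕ∞)) (zeta G S)).toNat}

/-- A connected dominating set of `G`. -/
def IsConnDomSet (G : SimpleGraph V) (S : Set V) : Prop :=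
  S.Nonempty ∧ (G.induce S).Connected ∧ ∀ v ∉ S, ∃ u ∈ S, G.Adj v u

/-- `γ_c(G)`: the minimum cardinality of a connected dominating set of `G`. -/
noncomputable def gammaC (G : SimpleGraph V) : ℕ :=
  sInf {n | ∃ S : Set V, IsConnDomSet G S ∧ S.ncard = n}

/-- The bipartite subgraph `⟨A, B⟩_G` of `G` induced by the partite sets `A` and `B`:
its vertex set is `A ∪ B` and its edges are the edges of `G` with one endpoint in `A`
and the other in `B`. -/
def bipartiteBetween (G : SimpleGraph V) (A B : Set V) : SimpleGraph ↥(A ∪ B) where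
  Adj u v := G.Adj ↑u ↑v ∧ (((u : V) ∈ A ∧ (v : V) ∈ B) ∨ ((u : V) ∈ B ∧ (v : V) ∈ A))
  symm := by
    refine ⟨?_⟩
    rintro u v ⟨h, hc | hc⟩
    · exact ⟨h.symm, Or.inr ⟨hc.2, hc.1⟩⟩
    · exact ⟨h.symm, Or.inl ⟨hc.2, hc.1⟩⟩
  loopless := by
    refine ⟨?_⟩
    rintro u ⟨h, -⟩
    exact G.loopless.irrefl _ h

/-- Every connected component of `H` contains a cycle. -/
def EveryComponentHasCycle (H : SimpleGraph W) : Prop :=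
  ∀ C : H.ConnectedComponent, ∃ v : W, H.connectedComponentMk v = C ∧
    ∃ p : H.Walk v v, p.IsCycle

/-- `H` is a path graph: a tree in which every vertex has degree at most 2. -/
def IsPathGraph (H : SimpleGraph W) : Prop :=
  H.IsTree ∧ ∀ v : W, (H.neighborSet v).ncard ≤ 2

end CISTPaper

/-!
Each tree `T_i` is given by a parent function with root in `V_i`: a vertex of `V_i` points to
the next vertex of a shortest path to the root inside `⟨V_i⟩`, a vertex outside all the `V_j`
points to any neighbour in `V_i`, and a vertex `v ∈ V_j` points to `c_{ij}(v) ∈ V_i`, where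
`c_{ij} = c_{ji}` sends each vertex of `V_i ∪ V_j` to a neighbour on the other side with
`c_{ij}(c_{ij}(v)) ≠ v`. Such a `c_{ij}` exists because every component of `⟨V_i, V_j⟩` has a
cycle: go around the cycle, and elsewhere step towards it.

Only vertices of `V_i` are parents in `T_i`, so the internal vertices of the trees are disjoint.
An edge `uv` lying in `T_i` and `T_j` would have to satisfy `u = c_{ij}(v)` and `v = c_{ij}(u)`,
so the trees are edge-disjoint. Vertices of `S` are parents in no tree, so the parent functions
restrict to `G - S`.
-/

namespace SimpleGraph

variable {V : Type*} {G : SimpleGraph V}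

theorem Reachable.exists_adj_dist_lt {u v : V} (h : G.Reachable u v) (hne : u ≠ v) :
    ∃ w, G.Adj u w ∧ G.dist w v < G.dist u v := by
  obtain ⟨p, hp⟩ := h.exists_walk_length_eq_dist
  cases p with
  | nil => exact absurd rfl hne
  | cons hadj q =>
    refine ⟨_, hadj, ?_⟩
    rw [← hp, Walk.length_cons]
    exact Nat.lt_succ_of_le (dist_le q)

namespace Walk

theorem IsCycle.exists_dart_fst_eq {u v : V} {c : G.Walk u u} (hc : c.IsCycle)
    (hv : v ∈ c.support) : ∃ d ∈ c.darts, d.fst = v := by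
  classical
  exact ⟨(c.rotate v hv).firstDart ((nil_rotate hv).not.2 hc.not_nil),
    (rotate_darts c v hv).mem_iff.1 (firstDart_mem_darts _), rfl⟩

/-- Following the orientation of a cycle never goes straight back, since a cycle does not
traverse an edge twice. -/
theorem IsCycle.exists_successor {u : V} {c : G.Walk u u} (hc : c.IsCycle) :
    ∃ σ : V → V, ∀ v ∈ c.support, G.Adj v (σ v) ∧ σ v ∈ c.support ∧ σ (σ v) ≠ v := by
  classical
  have hstep : ∀ v, ∃ w, v ∈ c.support → ∃ d ∈ c.darts, d.toProd = (v, w) := fun v =>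
    if hv : v ∈ c.support then
      (hc.exists_dart_fst_eq hv).elim fun d ⟨hd, hfst⟩ =>
        ⟨d.snd, fun _ => ⟨d, hd, by rw [← hfst]⟩⟩
    else ⟨v, fun h => absurd h hv⟩
  choose σ hσ using hstep
  refine ⟨σ, fun v hv => ?_⟩
  obtain ⟨d, hd, hdvw⟩ := hσ v hv
  have hadj : G.Adj v (σ v) := by simpa [hdvw] using d.adj
  have hw : σ v ∈ c.support := by simpa [hdvw] using c.dart_snd_mem_support_of_mem_darts hd
  refine ⟨hadj, hw, fun hback => hadj.ne ?_⟩
  obtain ⟨d', hd', hd'wv⟩ := hσ (σ v) hw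
  have hedge : d'.edge = d.edge := by
    rw [Dart.edge, Dart.edge, hd'wv, hdvw, hback, Sym2.eq_swap]
  have := congrArg Dart.toProd (List.inj_on_of_nodup_map hc.edges_nodup hd' hd hedge)
  rw [hd'wv, hdvw, hback] at this
  exact (Prod.ext_iff.1 this).1.symm

end Walk

end SimpleGraph

namespace CISTPaper

open SimpleGraph

section NeighborChoice

variable {W : Type*} {H : SimpleGraph W}

/-- Off the core `Z`, step to a neighbour of smaller rank: two such steps cannot return, and a
step into `Z` stays in `Z`. -/
theorem exists_nonreciprocal_choice_of_core (Z : Set W) (σ : W → W)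
    (hσ : ∀ v ∈ Z, H.Adj v (σ v) ∧ σ v ∈ Z ∧ σ (σ v) ≠ v) (rank : W → ℕ)
    (hrank : ∀ v ∉ Z, ∃ u, H.Adj v u ∧ rank u < rank v) :
    ∃ f : W → W, ∀ v, H.Adj v (f v) ∧ f (f v) ≠ v := by
  classical
  have hstep : ∀ v, ∃ u, v ∉ Z → H.Adj v u ∧ rank u < rank v := fun v =>
    if hv : v ∈ Z then ⟨v, fun h => absurd hv h⟩ else (hrank v hv).imp fun _ hu _ => hu
  choose g hg using hstep
  refine ⟨fun v => if v ∈ Z then σ v else g v, fun v => ?_⟩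
  by_cases hv : v ∈ Z
  · obtain ⟨hadj, hσv, hback⟩ := hσ v hv
    simpa [hv, hσv] using ⟨hadj, hback⟩
  · obtain ⟨hadj, hlt⟩ := hg v hv
    by_cases hu : g v ∈ Z
    · simp only [hv, hu, if_true, if_false]
      exact ⟨hadj, fun h => hv (h ▸ (hσ _ hu).2.1)⟩
    · simp only [hv, hu, if_false]
      exact ⟨hadj, fun h => ((hg _ hu).2.trans hlt).ne (congrArg rank h)⟩

theorem EveryComponentHasCycle.exists_nonreciprocal_choice (h : EveryComponentHasCycle H) :
    ∃ f : W → W, ∀ v, H.Adj v (f v) ∧ f (f v) ≠ v := by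
  choose w hw c hc using h
  choose σ hσ using fun C => (hc C).exists_successor
  have hmk_adj : ∀ {v u}, H.Adj v u → H.connectedComponentMk u = H.connectedComponentMk v :=
    fun hadj => ConnectedComponent.sound hadj.symm.reachable
  refine exists_nonreciprocal_choice_of_core {v | v ∈ (c (H.connectedComponentMk v)).support}
    (fun v => σ (H.connectedComponentMk v) v) ?_
    (fun v => H.dist v (w (H.connectedComponentMk v))) ?_
  · intro v hv
    obtain ⟨hadj, hmem, hback⟩ := hσ _ v hv
    refine ⟨hadj, ?_, ?_⟩
    · show _ ∈ (c (H.connectedComponentMk _)).support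
      rwa [hmk_adj hadj]
    · show σ (H.connectedComponentMk _) _ ≠ v
      rwa [hmk_adj hadj]
  · intro v hv
    have hreach : H.Reachable v (w (H.connectedComponentMk v)) :=
      ConnectedComponent.exact (hw _).symm
    have hne : v ≠ w (H.connectedComponentMk v) := by
      rintro heq
      apply hv
      show v ∈ (c (H.connectedComponentMk v)).support
      generalize H.connectedComponentMk v = C at heq ⊢
      rw [heq]
      exact Walk.start_mem_support _
    obtain ⟨u, hadj, hlt⟩ := hreach.exists_adj_dist_lt hne
    exact ⟨u, hadj, by rwa [hmk_adj hadj]⟩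

end NeighborChoice

section ParentGraph

variable {α : Type*}

/-- `p` is a parent function: iterating it leads every vertex down to a root `r = p r`. -/
def IsRootedParent (p : α → α) : Prop :=
  ∃ r, p r = r ∧ ∃ rank : α → ℕ, ∀ x, x ≠ r → rank (p x) < rank x

def parentGraph (p : α → α) : SimpleGraph α :=
  SimpleGraph.fromRel fun x y => p x = y

variable {p q : α → α}

theorem parentGraph_adj {x y : α} :
    (parentGraph p).Adj x y ↔ x ≠ y ∧ (p x = y ∨ p y = x) :=
  fromRel_adj _ _ _

theorem parentGraph_le {H : SimpleGraph α} (h : ∀ x, p x ≠ x → H.Adj x (p x)) :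
    parentGraph p ≤ H := by
  intro x y hxy
  obtain ⟨hne, rfl | rfl⟩ := parentGraph_adj.1 hxy
  · exact h x hne.symm
  · exact (h y hne).symm

theorem exists_isRootedParent_of_connected {H : SimpleGraph α} (hH : H.Connected) :
    ∃ p : α → α, IsRootedParent p ∧ ∀ x, p x ≠ x → H.Adj x (p x) := by
  classical
  obtain ⟨r⟩ := hH.nonempty
  have hstep : ∀ x, ∃ y, x ≠ r → H.Adj x y ∧ H.dist y r < H.dist x r := fun x =>
    if hx : x = r then ⟨x, fun h => absurd hx h⟩
    else ((hH.preconnected x r).exists_adj_dist_lt hx).imp fun _ hy _ => hy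
  choose p hp using hstep
  refine ⟨fun x => if x = r then r else p x,
    ⟨r, if_pos rfl, fun x => H.dist x r, fun x hx => ?_⟩, fun x hx => ?_⟩
  · simpa [hx] using (hp x hx).2
  · have hxr : x ≠ r := fun h => hx (by simp [h])
    simpa [hxr] using (hp x hxr).1

theorem IsRootedParent.restrict {s : Set α} (hp : IsRootedParent p) (hs : ∀ x, p x ∈ s) :
    IsRootedParent fun x : s => (⟨p x, hs x⟩ : s) := by
  obtain ⟨r, hr, rank, hrank⟩ := hp
  exact ⟨⟨r, hr ▸ hs r⟩, Subtype.ext hr, fun x => rank x,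
    fun x hx => hrank x fun h => hx (Subtype.ext h)⟩

theorem IsRootedParent.extend {s : Set α} [DecidablePred (· ∈ s)] {p : s → s}
    (hp : IsRootedParent p) (f : α → α) (hf : ∀ x ∉ s, f x ∈ s) :
    IsRootedParent fun x => if h : x ∈ s then (p ⟨x, h⟩ : α) else f x := by
  obtain ⟨r, hr, rank, hrank⟩ := hp
  refine ⟨r, by simp [hr],
    fun x => if h : x ∈ s then rank ⟨x, h⟩ else rank ⟨f x, hf x h⟩ + 1, fun x hxr => ?_⟩
  by_cases hx : x ∈ s
  · simpa [hx] using hrank ⟨x, hx⟩ fun h => hxr (congrArg Subtype.val h)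
  · simp [hx, hf x hx]

/-- On a cycle, the vertex of largest rank has both of its cycle neighbours equal to its
parent, which a cycle does not allow. -/
theorem IsRootedParent.isTree (hp : IsRootedParent p) : (parentGraph p).IsTree := by
  classical
  obtain ⟨r, hr, rank, hrank⟩ := hp
  have hreach : ∀ x, (parentGraph p).Reachable r x := by
    intro x
    induction hx : rank x using Nat.strong_induction_on generalizing x with
    | _ n ih =>
      by_cases hxr : x = r
      · rw [hxr]
      · have hadj : (parentGraph p).Adj (p x) x :=
          parentGraph_adj.2 ⟨fun h => (hrank x hxr).ne (congrArg rank h), Or.inr rfl⟩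
        exact (ih _ (hx ▸ hrank x hxr) (p x) rfl).trans hadj.reachable
  refine ⟨(connected_iff_exists_forall_reachable _).2 ⟨r, hreach⟩, fun u c hc => ?_⟩
  obtain ⟨v, hv, hmax⟩ := c.support.toFinset.exists_max_image rank ⟨u, by simp⟩
  rw [List.mem_toFinset] at hv
  have hparent : ∀ w ∈ c.support, (parentGraph p).Adj v w → w = p v := by
    intro w hw hvw
    obtain ⟨hne, hpv | hpw⟩ := parentGraph_adj.1 hvw
    · exact hpv.symm
    · have hwr : w ≠ r := fun h => hne (by rw [← hpw, h, hr])
      exact absurd (hmax w (List.mem_toFinset.2 hw)) (not_le.2 (hpw ▸ hrank w hwr))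
  have hc' := (Walk.isCycle_rotate hv).2 hc
  have hnil := hc'.not_nil
  exact hc'.snd_ne_penultimate <|
    (hparent _ ((c.mem_support_rotate_iff v hv).1 (Walk.getVert_mem_support _ 1))
      (Walk.adj_snd hnil)).trans
    (hparent _ ((c.mem_support_rotate_iff v hv).1 (Walk.getVert_mem_support _ _))
      (Walk.adj_penultimate hnil).symm).symm

theorem internalVerts_parentGraph_subset_range :
    internalVerts (parentGraph p) ⊆ Set.range p := by
  intro v hv
  by_contra hnot
  have hsub : (parentGraph p).neighborSet v ⊆ {p v} := by
    intro w hw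
    obtain ⟨-, hpv | hpw⟩ := parentGraph_adj.1 hw
    · exact hpv.symm
    · exact absurd ⟨w, hpw⟩ hnot
  have := (Set.ncard_le_ncard hsub (Set.finite_singleton _)).trans (Set.ncard_singleton _).le
  exact absurd hv (by simp only [internalVerts, Set.mem_ofPred_eq]; omega)

theorem disjoint_edgeSet_parentGraph (hrange : Disjoint (Set.range p) (Set.range q))
    (hpq : ∀ x, q (p x) ≠ x) :
    Disjoint (parentGraph p).edgeSet (parentGraph q).edgeSet := by
  refine Set.disjoint_left.2 (Sym2.ind fun x y hp hq => ?_)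
  rw [mem_edgeSet] at hp hq
  obtain ⟨-, rfl | rfl⟩ := parentGraph_adj.1 hp <;> obtain ⟨-, hq | hq⟩ := parentGraph_adj.1 hq
  · exact hrange.ne_of_mem ⟨x, rfl⟩ ⟨x, hq⟩ rfl
  · exact hpq x hq
  · exact hpq y hq
  · exact hrange.ne_of_mem ⟨y, rfl⟩ ⟨y, hq⟩ rfl

theorem hasCIST_of_parents {k : ℕ} (H : SimpleGraph α) (p : Fin k → α → α)
    (hroot : ∀ i, IsRootedParent (p i)) (hadj : ∀ i x, p i x ≠ x → H.Adj x (p i x))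
    (hrange : ∀ i j, i ≠ j → Disjoint (Set.range (p i)) (Set.range (p j)))
    (hback : ∀ i j, i ≠ j → ∀ x, p j (p i x) ≠ x) :
    HasCIST H k :=
  ⟨fun i => parentGraph (p i), fun i => ⟨parentGraph_le (hadj i), (hroot i).isTree⟩,
    fun i j hij => ⟨disjoint_edgeSet_parentGraph (hrange i j hij) (hback i j hij),
      (hrange i j hij).mono internalVerts_parentGraph_subset_range
        internalVerts_parentGraph_subset_range⟩⟩

end ParentGraph

section CrossingChoice

variable {V : Type*} {G : SimpleGraph V}

/-- `c (c v) ≠ v`: no edge is chosen from both of its ends. -/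
def IsCrossingChoice (G : SimpleGraph V) (A B : Set V) (c : V → V) : Prop :=
  ∀ v ∈ A ∪ B, G.Adj v (c v) ∧ (v ∈ A → c v ∈ B) ∧ (v ∈ B → c v ∈ A) ∧ c (c v) ≠ v

theorem IsCrossingChoice.symm {A B : Set V} {c : V → V} (h : IsCrossingChoice G A B c) :
    IsCrossingChoice G B A c := fun v hv =>
  let ⟨hadj, hA, hB, hback⟩ := h v (Set.union_comm B A ▸ hv)
  ⟨hadj, hB, hA, hback⟩

theorem exists_isCrossingChoice {A B : Set V} (hAB : Disjoint A B)
    (h : EveryComponentHasCycle (bipartiteBetween G A B)) :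
    ∃ c, IsCrossingChoice G A B c := by
  classical
  obtain ⟨f, hf⟩ := h.exists_nonreciprocal_choice
  refine ⟨fun v => if hv : v ∈ A ∪ B then f ⟨v, hv⟩ else v, fun v hv => ?_⟩
  obtain ⟨⟨hadj, hside⟩, hback⟩ := hf ⟨v, hv⟩
  simp only [dif_pos hv, dif_pos (f ⟨v, hv⟩).2, Subtype.coe_eta]
  refine ⟨hadj, fun hA => ?_, fun hB => ?_, fun h => hback (Subtype.ext h)⟩
  · exact (hside.resolve_right fun h => hAB.ne_of_mem hA h.1 rfl).2
  · exact (hside.resolve_left fun h => hAB.ne_of_mem h.1 hB rfl).2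

theorem exists_symm_isCrossingChoice {ι : Type*} [LinearOrder ι] (Vs : ι → Set V)
    (hdisj : ∀ i j, i ≠ j → Disjoint (Vs i) (Vs j))
    (hcyc : ∀ i j, i ≠ j → EveryComponentHasCycle (bipartiteBetween G (Vs i) (Vs j))) :
    ∃ c : ι → ι → V → V,
      ∀ i j, i ≠ j → c i j = c j i ∧ IsCrossingChoice G (Vs i) (Vs j) (c i j) := by
  have h : ∀ i j, ∃ c : V → V, i ≠ j → IsCrossingChoice G (Vs i) (Vs j) c := fun i j =>
    if hij : i = j then ⟨id, fun h => absurd hij h⟩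
    else (exists_isCrossingChoice (hdisj i j hij) (hcyc i j hij)).imp fun _ hc _ => hc
  choose c hc using h
  refine ⟨fun i j => c (min i j) (max i j),
    fun i j hij => ⟨by dsimp only; rw [min_comm, max_comm], ?_⟩⟩
  rcases le_total i j with hle | hle
  · simpa only [min_eq_left hle, max_eq_right hle] using hc i j hij
  · simpa only [min_eq_right hle, max_eq_left hle] using (hc j i hij.symm).symm

end CrossingChoice

section Parents

variable {V : Type*} {G : SimpleGraph V}

theorem IsConnDomSet.exists_parent {A : Set V} (hA : IsConnDomSet G A) (q : V → V) :
    ∃ p : V → V, IsRootedParent p ∧ (∀ x, p x ≠ x → G.Adj x (p x)) ∧ (∀ x, p x ∈ A) ∧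
      ∀ x ∉ A, q x ∈ A → G.Adj x (q x) → p x = q x := by
  classical
  obtain ⟨-, hconn, hdom⟩ := hA
  obtain ⟨pA, hpA, hadjA⟩ := exists_isRootedParent_of_connected hconn
  have hout : ∀ x, ∃ y, x ∉ A → y ∈ A ∧ G.Adj x y ∧
      (q x ∈ A → G.Adj x (q x) → y = q x) := by
    intro x
    by_cases hq : q x ∈ A ∧ G.Adj x (q x)
    · exact ⟨q x, fun _ => ⟨hq.1, hq.2, fun _ _ => rfl⟩⟩
    by_cases hx : x ∈ A
    · exact ⟨x, fun h => absurd hx h⟩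
    obtain ⟨y, hy, hadj⟩ := hdom x hx
    exact ⟨y, fun _ => ⟨hy, hadj, fun h1 h2 => absurd ⟨h1, h2⟩ hq⟩⟩
  choose pout hpout using hout
  refine ⟨_, hpA.extend pout fun x hx => (hpout x hx).1, fun x hx => ?_, fun x => ?_,
    fun x hx hqA hqadj => by simpa [hx] using (hpout x hx).2.2 hqA hqadj⟩
  · by_cases hxA : x ∈ A
    · simp only [hxA, dite_true] at hx ⊢
      exact hadjA ⟨x, hxA⟩ fun h => hx (congrArg Subtype.val h)
    · simpa [hxA] using (hpout x hxA).2.1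
  · by_cases hxA : x ∈ A
    · simp [hxA]
    · simpa [hxA] using (hpout x hxA).1

theorem exists_parent_family {ι : Type*} [LinearOrder ι] (Vs : ι → Set V)
    (hdom : ∀ i, IsConnDomSet G (Vs i)) (hdisj : ∀ i j, i ≠ j → Disjoint (Vs i) (Vs j))
    (hcyc : ∀ i j, i ≠ j → EveryComponentHasCycle (bipartiteBetween G (Vs i) (Vs j))) :
    ∃ p : ι → V → V, (∀ i, IsRootedParent (p i)) ∧ (∀ i x, p i x ≠ x → G.Adj x (p i x)) ∧
      (∀ i x, p i x ∈ Vs i) ∧ ∀ i j, i ≠ j → ∀ x, p j (p i x) ≠ x := by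
  classical
  obtain ⟨c, hc⟩ := exists_symm_isCrossingChoice Vs hdisj hcyc
  let q : ι → V → V := fun i x => if h : ∃ j, x ∈ Vs j then c i h.choose x else x
  have hq : ∀ i j x, x ∈ Vs j → q i x = c i j x := by
    intro i j x hx
    have h : ∃ j, x ∈ Vs j := ⟨j, hx⟩
    have hj : h.choose = j :=
      by_contra fun hne => (hdisj _ _ hne).ne_of_mem h.choose_spec hx rfl
    simp only [q, dif_pos h, hj]
  choose p hroot hadj hmem hpq using fun i => (hdom i).exists_parent (q i)
  have hpc : ∀ i j, i ≠ j → ∀ x ∈ Vs j, p i x = c i j x := by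
    intro i j hij x hx
    obtain ⟨hadjx, -, hxi, -⟩ := (hc i j hij).2 x (Or.inr hx)
    rw [← hq i j x hx] at hadjx hxi ⊢
    exact hpq i x (Set.disjoint_left.1 (hdisj j i hij.symm) hx) (hxi hx) hadjx
  refine ⟨p, hroot, hadj, hmem, fun i j hij x hback => ?_⟩
  have hx : x ∈ Vs j := hback ▸ hmem j _
  obtain ⟨hsymm, hcross⟩ := hc i j hij
  obtain ⟨-, -, hxi, hnot_back⟩ := hcross x (Or.inr hx)
  have hpp : p j (p i x) = c i j (c i j x) := by
    rw [hpc i j hij x hx, hpc j i hij.symm _ (hxi hx), hsymm]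
  exact hnot_back (hpp.symm.trans hback)

end Parents

theorem stmt_10_general {V : Type*} (G : SimpleGraph V) (k : ℕ)
    (Vs : Fin k → Set V)
    (hdom : ∀ i, IsConnDomSet G (Vs i))
    (hdisj : ∀ i j, i ≠ j → Disjoint (Vs i) (Vs j))
    (hcyc : ∀ i j, i ≠ j → EveryComponentHasCycle (bipartiteBetween G (Vs i) (Vs j)))
    (S : Set V) (hS : S ⊆ (⋃ i, Vs i)ᶜ) :
    HasCIST (G.induce Sᶜ) k := by
  obtain ⟨p, hroot, hadj, hmem, hback⟩ := exists_parent_family Vs hdom hdisj hcyc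
  have hpS : ∀ i x, p i x ∈ Sᶜ := fun i x hx => hS hx (Set.mem_iUnion.2 ⟨i, hmem i x⟩)
  refine hasCIST_of_parents _ (fun i x => ⟨p i x, hpS i x⟩) (fun i => (hroot i).restrict _)
    (fun i x hx => hadj i x fun h => hx (Subtype.ext h)) (fun i j hij => ?_)
    (fun i j hij x h => hback i j hij x (congrArg Subtype.val h))
  refine Set.disjoint_left.2 ?_
  rintro _ ⟨x, rfl⟩ ⟨y, hy⟩
  exact (hdisj i j hij).ne_of_mem (hmem i x) (hmem j y) (congrArg Subtype.val hy).symm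

/-- If a finite simple graph `G` has `k` pairwise disjoint connected
dominating sets `V_1, …, V_k` such that for all `i ≠ j` every connected component of
the bipartite subgraph `⟨V_i, V_j⟩_G` contains a cycle, then for every
`S ⊆ V(G) \ (V_1 ∪ … ∪ V_k)`, the graph `G - S` has `k` completely independent
spanning trees. -/
theorem stmt_10 {V : Type*} [Fintype V] (G : SimpleGraph V) (k : ℕ)
    (Vs : Fin k → Set V)
    (hdom : ∀ i, IsConnDomSet G (Vs i))
    (hdisj : ∀ i j, i ≠ j → Disjoint (Vs i) (Vs j))
    (hcyc : ∀ i j, i ≠ j → EveryComponentHasCycle (bipartiteBetween G (Vs i) (Vs j)))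
    (S : Set V) (hS : S ⊆ (⋃ i, Vs i)ᶜ) :
    HasCIST (G.induce Sᶜ) k :=
  stmt_10_general G k Vs hdom hdisj hcyc S hS

end CISTPaper
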